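/- Let Γ : ℝⁿ → ℝ be the concave envelope of u⁺ in B_3 (Γ = 0 outside B_3) of an upper semicontinuous function u with u ≤ 0 outside B_1 and sup_{B_1} u⁺ = S > 0. Then B_{S/4} ⊆ ∇Γ(B_1), where ∇Γ(B_1) denotes the set of all superdifferentials of Γ at points of B_1; consequently S^n ≤ c₁(n) |∇Γ(B_1)| for a dimensional constant c₁(n). -/

import Mathlib

open Metric Set MeasureTheory
open scoped RealInnerProductSpace Classical

noncomputable section

/-- An upper semicontinuous real function attains its maximum on a nonempty compact set. -/
lemma usc_exists_max {X : Type*} [TopologicalSpace X] {K : Set X} (hK : IsCompact K)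
    (hne : K.Nonempty) {f : X → ℝ} (hf : UpperSemicontinuous f) :
    ∃ x ∈ K, ∀ y ∈ K, f y ≤ f x := by
  have h := hK.inter_iInter_nonempty (ι := K) (fun i => f ⁻¹' Ici (f i))
    (fun i => hf.isClosed_preimage _) ?_
  · obtain ⟨x, hxK, hx⟩ := h
    refine ⟨x, hxK, fun y hy => ?_⟩
    simpa using mem_iInter.1 hx ⟨y, hy⟩
  · intro t
    rcases t.eq_empty_or_nonempty with rfl | ht
    · simpa using hne
    · obtain ⟨i₀, hi₀, hmax⟩ := t.exists_max_image (fun i => f (i : X)) ht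
      refine ⟨(i₀ : X), i₀.2, ?_⟩
      simp only [mem_iInter, mem_preimage, mem_Ici]
      intro i hi
      exact hmax i hi

/-- The concave envelope of `u⁺` in `B_3`: the infimum over affine functions lying
above `u⁺ = max u 0` on `B_3`, set to `0` outside `B_3`. -/
def concEnv {n : ℕ} (u : EuclideanSpace ℝ (Fin n) → ℝ) (x : EuclideanSpace ℝ (Fin n)) : ℝ :=
  if x ∈ ball (0 : EuclideanSpace ℝ (Fin n)) 3 then
    sInf {v | ∃ (ξ : EuclideanSpace ℝ (Fin n)) (a : ℝ),
      (∀ y ∈ ball (0 : EuclideanSpace ℝ (Fin n)) 3, max (u y) 0 ≤ ⟪ξ, y⟫ + a) ∧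
      v = ⟪ξ, x⟫ + a}
  else 0

/-- The set of superdifferentials (in `B_3`) of `Γ` attained at points of `E`:
`∇Γ(E) = {ξ : ∃ x ∈ E, Γ(y) ≤ Γ(x) + ⟨ξ, y - x⟩ for all y ∈ B_3}`. -/
def gradSet {n : ℕ} (Γ : EuclideanSpace ℝ (Fin n) → ℝ) (E : Set (EuclideanSpace ℝ (Fin n))) :
    Set (EuclideanSpace ℝ (Fin n)) :=
  {ξ | ∃ x ∈ E, ∀ y ∈ ball (0 : EuclideanSpace ℝ (Fin n)) 3, Γ y ≤ Γ x + ⟪ξ, y - x⟫}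

theorem stmt_18 {n : ℕ} (hn : 0 < n) :
    ∃ c₁ > (0 : ℝ), ∀ (u : EuclideanSpace ℝ (Fin n) → ℝ) (S : ℝ),
      UpperSemicontinuous u →
      (∀ y ∉ ball (0 : EuclideanSpace ℝ (Fin n)) 1, u y ≤ 0) →
      S = sSup ((fun x => max (u x) 0) '' ball (0 : EuclideanSpace ℝ (Fin n)) 1) →
      0 < S →
      ball (0 : EuclideanSpace ℝ (Fin n)) (S / 4)
          ⊆ gradSet (concEnv u) (ball (0 : EuclideanSpace ℝ (Fin n)) 1) ∧
      ENNReal.ofReal (S ^ n) ≤ ENNReal.ofReal c₁ *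
          volume (gradSet (concEnv u) (ball (0 : EuclideanSpace ℝ (Fin n)) 1)) := by
  have hV0 : (0 : ENNReal) < volume (ball (0 : EuclideanSpace ℝ (Fin n)) 1) :=
    measure_ball_pos _ _ one_pos
  have hVtop : volume (ball (0 : EuclideanSpace ℝ (Fin n)) 1) ≠ ⊤ := measure_ball_lt_top.ne
  set V := (volume (ball (0 : EuclideanSpace ℝ (Fin n)) 1)).toReal with hVdef
  have hVpos : 0 < V := ENNReal.toReal_pos hV0.ne' hVtop
  refine ⟨4 ^ n / V, by positivity, ?_⟩
  intro u S husc hout hS hSpos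
  have key : ball (0 : EuclideanSpace ℝ (Fin n)) (S / 4)
      ⊆ gradSet (concEnv u) (ball (0 : EuclideanSpace ℝ (Fin n)) 1) := by
    intro ξ hξ
    rw [mem_ball_zero_iff] at hξ
    -- `u⁺` is upper semicontinuous
    have huplus : UpperSemicontinuous (fun y => max (u y) 0) := by
      intro x y hy
      have h1 : u x < y := lt_of_le_of_lt (le_max_left _ _) hy
      have h2 : (0 : ℝ) < y := lt_of_le_of_lt (le_max_right _ _) hy
      filter_upwards [husc x y h1] with z hz
      exact max_lt hz h2
    have hcont : Continuous (fun y : EuclideanSpace ℝ (Fin n) => -⟪ξ, y⟫) :=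
      (continuous_const.inner continuous_id).neg
    have hg : UpperSemicontinuous (fun y => max (u y) 0 + -⟪ξ, y⟫) :=
      huplus.add hcont.upperSemicontinuous
    obtain ⟨x₀, hx₀K, hx₀max⟩ :=
      usc_exists_max (isCompact_closedBall (0 : EuclideanSpace ℝ (Fin n)) 1)
        ⟨0, mem_closedBall_self zero_le_one⟩ hg
    set a := max (u x₀) 0 + -⟪ξ, x₀⟫ with ha
    have hx₀n : ‖x₀‖ ≤ 1 := mem_closedBall_zero_iff.1 hx₀K
    -- `a ≥ S - ‖ξ‖`
    have ha0 : (0 : ℝ) ≤ a := by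
      have h0 := hx₀max 0 (mem_closedBall_self zero_le_one)
      have hz : ⟪ξ, (0 : EuclideanSpace ℝ (Fin n))⟫ = 0 := inner_zero_right ξ
      rw [hz] at h0
      have := le_max_right (u 0) (0 : ℝ)
      linarith
    have hSle : S ≤ a + ‖ξ‖ := by
      rw [hS]
      apply Real.sSup_le
      · rintro v ⟨y, hy, rfl⟩
        have hy1 : ‖y‖ ≤ 1 := le_of_lt (mem_ball_zero_iff.1 hy)
        have hm := hx₀max y (mem_closedBall_zero_iff.2 hy1)
        have hin : ⟪ξ, y⟫ ≤ ‖ξ‖ := by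
          have h1 := real_inner_le_norm ξ y
          nlinarith [norm_nonneg ξ]
        linarith
      · linarith [norm_nonneg ξ]
    have ha34 : 3 * (S / 4) < a := by linarith
    -- the max point lies in the open unit ball
    have hx₀B1 : x₀ ∈ ball (0 : EuclideanSpace ℝ (Fin n)) 1 := by
      by_contra h
      have hu0 : u x₀ ≤ 0 := hout x₀ h
      have hmax0 : max (u x₀) 0 = 0 := max_eq_right hu0
      have hinn : -⟪ξ, x₀⟫ ≤ ‖ξ‖ := by
        have h1 := abs_real_inner_le_norm ξ x₀
        have h2 := neg_abs_le ⟪ξ, x₀⟫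
        nlinarith [norm_nonneg ξ]
      rw [ha, hmax0] at ha34
      linarith
    -- the affine function dominates `u⁺` on `B_3`
    have hdom : ∀ y ∈ ball (0 : EuclideanSpace ℝ (Fin n)) 3, max (u y) 0 ≤ ⟪ξ, y⟫ + a := by
      intro y hy
      by_cases hy1 : ‖y‖ ≤ 1
      · have hm := hx₀max y (mem_closedBall_zero_iff.2 hy1)
        linarith
      · push_neg at hy1
        have hu : u y ≤ 0 := hout y (by rw [mem_ball_zero_iff]; linarith)
        rw [max_eq_right hu]
        have hy3 : ‖y‖ < 3 := mem_ball_zero_iff.1 hy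
        have hinn : -(‖ξ‖ * 3) ≤ ⟪ξ, y⟫ := by
          have h1 := abs_real_inner_le_norm ξ y
          have h2 := neg_abs_le ⟪ξ, y⟫
          nlinarith [norm_nonneg ξ, abs_nonneg ⟪ξ, y⟫]
        nlinarith
    -- the envelope lies below the affine function on `B_3`
    have hΓle : ∀ y ∈ ball (0 : EuclideanSpace ℝ (Fin n)) 3,
        concEnv u y ≤ ⟪ξ, y⟫ + a := by
      intro y hy
      rw [concEnv, if_pos hy]
      apply csInf_le
      · refine ⟨0, ?_⟩
        rintro v ⟨ξ', a', hd, rfl⟩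
        have h1 := hd y hy
        have h2 := le_max_right (u y) (0 : ℝ)
        linarith
      · exact ⟨ξ, a, hdom, rfl⟩
    have hx₀B3 : x₀ ∈ ball (0 : EuclideanSpace ℝ (Fin n)) 3 :=
      mem_ball_zero_iff.2 (by linarith)
    have hΓge : max (u x₀) 0 ≤ concEnv u x₀ := by
      rw [concEnv, if_pos hx₀B3]
      refine le_csInf ⟨⟪ξ, x₀⟫ + a, ⟨ξ, a, hdom, rfl⟩⟩ ?_
      rintro v ⟨ξ', a', hd, rfl⟩
      exact hd x₀ hx₀B3
    refine ⟨x₀, hx₀B1, fun y hy => ?_⟩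
    have h1 := hΓle y hy
    have h2 : ⟪ξ, y - x₀⟫ = ⟪ξ, y⟫ - ⟪ξ, x₀⟫ := inner_sub_right ξ y x₀
    linarith [hΓge]
  refine ⟨key, ?_⟩
  -- the measure estimate
  have hfr : Module.finrank ℝ (EuclideanSpace ℝ (Fin n)) = n := finrank_euclideanSpace_fin
  have hvol : volume (ball (0 : EuclideanSpace ℝ (Fin n)) (S / 4))
      = ENNReal.ofReal ((S / 4) ^ n) * volume (ball (0 : EuclideanSpace ℝ (Fin n)) 1) := by
    rw [Measure.addHaar_ball_of_pos volume 0 (by positivity : (0:ℝ) < S / 4), hfr]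
  have hmono : volume (ball (0 : EuclideanSpace ℝ (Fin n)) (S / 4))
      ≤ volume (gradSet (concEnv u) (ball (0 : EuclideanSpace ℝ (Fin n)) 1)) :=
    measure_mono key
  calc ENNReal.ofReal (S ^ n)
      = ENNReal.ofReal (4 ^ n / V) * (ENNReal.ofReal ((S / 4) ^ n) * ENNReal.ofReal V) := by
        rw [← ENNReal.ofReal_mul (by positivity), ← ENNReal.ofReal_mul (by positivity)]
        congr 1
        field_simp
        rw [← mul_pow]
        ring_nf
    _ = ENNReal.ofReal (4 ^ n / V) * volume (ball (0 : EuclideanSpace ℝ (Fin n)) (S / 4)) := by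
        rw [hvol, hVdef, ENNReal.ofReal_toReal hVtop]
    _ ≤ ENNReal.ofReal (4 ^ n / V) *
        volume (gradSet (concEnv u) (ball (0 : EuclideanSpace ℝ (Fin n)) 1)) :=
        mul_le_mul_right hmono _
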